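/- arXiv:1105.0438 — 2 statements merged into one kernel-verified Lean document; each statement's English description precedes it below -/
import Mathlib

section
/- Let A be a multicast tree and u a node of A with children u₁,…,u_ℓ. If a diffusing set D is sub-optimal for the subtree A^u, then D is sub-optimal for each subtree A^{u_i}, 1 ≤ i ≤ ℓ. -/
attribute [local instance] Classical.propDecidable

/-- A finite rooted tree given by a parent function: the root is its own parent,
and every vertex reaches the root by iterating `parent`.  Arcs are directed from
`parent w` to `w`. -/
structure MTree (V : Type) [Fintype V] [DecidableEq V] where
  root : V
  parent : V → V
  parent_root : parent root = root
  reach : ∀ v, ∃ n, parent^[n] v = root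

namespace MTree

variable {V : Type} [Fintype V] [DecidableEq V]

/-- `a` is an ancestor of (or equal to) `b`; equivalently `b` lies in the subtree `A^a`. -/
def anc (T : MTree V) (a b : V) : Prop := ∃ n, T.parent^[n] b = a

/-- distance from the root to `v`. -/
noncomputable def depth (T : MTree V) (v : V) : ℕ := Nat.find (T.reach v)

/-- `w` is a child of `u`. -/
def isChild (T : MTree V) (w u : V) : Prop := T.parent w = u ∧ w ≠ u

/-- A path of a solution is encoded by its (origin, final extremity) pair, the
origin being an ancestor of the final extremity.  The path number `pn u`: number
of paths of `P` passing through or terminating at `u`. -/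
noncomputable def pn (T : MTree V) (P : Finset (V × V)) (u : V) : ℕ :=
  (P.filter (fun p => T.anc p.1 u ∧ T.anc u p.2 ∧ u ≠ p.1)).card

/-- number of diffusing nodes of `D` lying in the subtree `A^u`. -/
noncomputable def dCount (T : MTree V) (D : Finset V) (u : V) : ℕ :=
  (D.filter (fun x => T.anc u x)).card

/-- total load of a set of paths: sum of their lengths. -/
noncomputable def load (T : MTree V) (P : Finset (V × V)) : ℕ :=
  ∑ p ∈ P, (T.depth p.2 - T.depth p.1)

/-- load of the solution inside the subtree `A^u`, including the arc `a^u`: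
each arc entering a vertex `w` of `A^u` carries `pn w` paths. -/
noncomputable def loadIn (T : MTree V) (P : Finset (V × V)) (u : V) : ℕ :=
  ∑ w ∈ Finset.univ.filter (fun w => T.anc u w), T.pn P w

/-- `P` is the solution `S(D)` induced by the diffusing set `D` for the multicast
request with source `T.root` and destination set `R`. -/
def isSolution (T : MTree V) (R D : Finset V) (P : Finset (V × V)) : Prop :=
  (∀ p ∈ P, T.anc p.1 p.2) ∧
  (∀ r ∈ R, (P.filter (fun p => p.2 = r)).card = 1) ∧
  (∀ v ∈ D, (P.filter (fun p => p.2 = v)).card ≤ 1) ∧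
  (∀ p ∈ P, p.1 = T.root ∨ (p.1 ∈ D ∧ ∃ q ∈ P, q.2 = p.1)) ∧
  (∀ v ∈ D, ∀ p ∈ P, (T.anc p.1 v ∧ T.anc v p.2) → v = p.1 ∨ v = p.2)

/-- the window of the solution `P` induced by `D` on the arc `a^u`. -/
noncomputable def window (T : MTree V) (D : Finset V) (P : Finset (V × V)) (u : V) :
    ℕ × ℕ × ℕ := (T.pn P u, T.dCount D u, T.loadIn P u)

end MTree

/-- `D` (with induced solution `P`) is sub-optimal for the subtree `A^u`: every
diffusing set `D'` whose window on `a^u` has the same path number and the same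
number of diffusing nodes has load at least that of `D`. -/
def MTree.subOptimal {V : Type} [Fintype V] [DecidableEq V] (T : MTree V)
    (R D : Finset V) (P : Finset (V × V)) (u : V) : Prop :=
  ∀ D' : Finset V, ∀ P' : Finset (V × V), T.isSolution R D' P' →
    T.pn P' u = T.pn P u → T.dCount D' u = T.dCount D u →
    T.loadIn P u ≤ T.loadIn P' u

/- ======================= auxiliary lemmas ======================= -/

set_option linter.unusedSectionVars false

namespace MTree

variable {V : Type} [Fintype V] [DecidableEq V] (T : MTree V)

lemma anc_refl (a : V) : T.anc a a := ⟨0, rfl⟩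

lemma anc_trans {a b c : V} (h1 : T.anc a b) (h2 : T.anc b c) : T.anc a c := by
  obtain ⟨n, hn⟩ := h1; obtain ⟨m, hm⟩ := h2
  exact ⟨n + m, by rw [Function.iterate_add_apply, hm, hn]⟩

lemma iterate_root (n : ℕ) : T.parent^[n] T.root = T.root := by
  induction n with
  | zero => rfl
  | succ k ih => rw [Function.iterate_succ_apply', ih, T.parent_root]

lemma eq_root_of_anc_root {a : V} (h : T.anc a T.root) : a = T.root := by
  obtain ⟨n, hn⟩ := h; rw [iterate_root] at hn; exact hn.symm

lemma anc_antisymm {a b : V} (h1 : T.anc a b) (h2 : T.anc b a) : a = b := by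
  obtain ⟨n, hn⟩ := h1; obtain ⟨m, hm⟩ := h2
  rcases Nat.eq_zero_or_pos (m + n) with h0 | hpos
  · have hn0 : n = 0 := by omega
    subst hn0; exact hn.symm
  · have hper : T.parent^[m + n] b = b := by
      rw [Function.iterate_add_apply, hn, hm]
    have hmul : ∀ j, T.parent^[(m + n) * j] b = b := by
      intro j; induction j with
      | zero => rfl
      | succ k ih => rw [Nat.mul_succ, Function.iterate_add_apply, hper, ih]
    obtain ⟨k, hk⟩ := T.reach b
    have hkk : k ≤ (m + n) * k := Nat.le_mul_of_pos_left k hpos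
    have hb : b = T.root := by
      have h2 := hmul k
      rw [show (m + n) * k = ((m + n) * k - k) + k by omega,
        Function.iterate_add_apply, hk, iterate_root] at h2
      exact h2.symm
    subst hb
    rw [iterate_root] at hn
    exact hn.symm

lemma anc_total {a b c : V} (h1 : T.anc a c) (h2 : T.anc b c) :
    T.anc a b ∨ T.anc b a := by
  obtain ⟨n, hn⟩ := h1; obtain ⟨m, hm⟩ := h2
  rcases le_total n m with h | h
  · right
    exact ⟨m - n, by rw [← hn, ← Function.iterate_add_apply, Nat.sub_add_cancel h]; exact hm⟩
  · left
    exact ⟨n - m, by rw [← hm, ← Function.iterate_add_apply, Nat.sub_add_cancel h]; exact hn⟩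

end MTree

lemma card_filter_attach' {α : Type*} (s : Finset α) (p : α → Prop)
    (i1 : DecidablePred p) (i2 : DecidablePred (fun x : {y // y ∈ s} => p x.val)) :
    (@Finset.filter _ _ i2 s.attach).card = (@Finset.filter _ _ i1 s).card := by
  apply Finset.card_bij (fun x _ => x.val)
  · intro a ha
    rw [Finset.mem_filter] at ha ⊢
    exact ⟨a.prop, ha.2⟩
  · intro a _ b _ h; exact Subtype.ext h
  · intro b hb
    rw [Finset.mem_filter] at hb
    exact ⟨⟨b, hb.1⟩, by simp [Finset.mem_filter, hb.2], rfl⟩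

lemma card_filter_equivImage' {α β : Type*} {s : Finset α} {t : Finset β}
    (e : {x // x ∈ s} ≃ {x // x ∈ t}) (q : β → Prop)
    (i1 : DecidablePred q) (i2 : DecidablePred (fun x : {y // y ∈ s} => q (e x).val)) :
    (@Finset.filter _ _ i2 s.attach).card = (@Finset.filter _ _ i1 t).card := by
  rw [← card_filter_attach' t q i1 (fun x => i1 x.val)]
  apply Finset.card_bij (fun x _ => e x)
  · intro a ha
    rw [Finset.mem_filter] at ha ⊢
    exact ⟨Finset.mem_attach _ _, ha.2⟩
  · intro a _ b _ h; exact e.injective h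
  · intro b hb
    rw [Finset.mem_filter] at hb
    refine ⟨e.symm b, ?_, by simp⟩
    rw [Finset.mem_filter]
    exact ⟨Finset.mem_attach _ _, by simpa using hb.2⟩

/- ======================= main theorem ======================= -/

/-- Property 2: if `D` is sub-optimal for `A^u` then it is sub-optimal for the
subtree rooted at each child of `u`. -/
theorem subOptimal_children {V : Type} [Fintype V] [DecidableEq V]
    (T : MTree V) (R D : Finset V) (P : Finset (V × V))
    (hsol : T.isSolution R D P)
    (u : V) (hsub : T.subOptimal R D P u) :
    ∀ w, T.isChild w u → T.subOptimal R D P w := by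
  intro w hw D' P' hsol' hpn' hd'
  obtain ⟨hwp, hwne⟩ := hw
  obtain ⟨h1, h2, h3, h4, h5⟩ := hsol
  obtain ⟨h1', h2', h3', h4', h5'⟩ := hsol'
  -- basic ancestor facts
  have hanc_uw : T.anc u w := ⟨1, hwp⟩
  have hnwu : ¬ T.anc w u := fun h => hwne (T.anc_antisymm hanc_uw h).symm
  have hsubwu : ∀ x, T.anc w x → T.anc u x := fun x hx => T.anc_trans hanc_uw hx
  have hnot_wx : ∀ x, T.anc x w → x ≠ w → ¬ T.anc w x :=
    fun x hx hne h => hne (T.anc_antisymm hx h)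
  -- the crossing paths
  set C : Finset (V × V) :=
    P.filter (fun p => T.anc p.1 w ∧ T.anc w p.2 ∧ w ≠ p.1) with hC
  set C' : Finset (V × V) :=
    P'.filter (fun p => T.anc p.1 w ∧ T.anc w p.2 ∧ w ≠ p.1) with hC'
  have hCcard : C.card = C'.card := hpn'.symm
  have hCfacts : ∀ c : {x // x ∈ C},
      c.val ∈ P ∧ T.anc c.val.1 w ∧ T.anc w c.val.2 ∧ w ≠ c.val.1 :=
    fun c => Finset.mem_filter.mp c.prop
  have hC'facts : ∀ c : {x // x ∈ C'},
      c.val ∈ P' ∧ T.anc c.val.1 w ∧ T.anc w c.val.2 ∧ w ≠ c.val.1 :=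
    fun c => Finset.mem_filter.mp c.prop
  -- distinct extremities of crossing paths of P'
  have hkey : ∀ a ∈ C', ∀ b ∈ C', T.anc a.1 b.1 → a.1 = b.1 := by
    intro a ha b hb hab
    rw [Finset.mem_filter] at ha hb
    rcases h4' b hb.1 with hroot | ⟨hbD, _⟩
    · rw [hroot] at hab ⊢
      exact T.eq_root_of_anc_root hab
    · rcases h5' b.1 hbD a ha.1 ⟨hab, T.anc_trans hb.2.1 ha.2.2.1⟩ with h | h
      · exact h.symm
      · exfalso
        apply hb.2.2.2
        apply T.anc_antisymm
        · rw [h]; exact ha.2.2.1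
        · exact hb.2.1
  have hextC' : ∀ a ∈ C', ∀ b ∈ C', a.2 = b.2 → a = b := by
    intro a ha b hb h2eq
    have ha' := Finset.mem_filter.mp ha
    have hb' := Finset.mem_filter.mp hb
    have h1eq : a.1 = b.1 := by
      rcases T.anc_total ha'.2.1 hb'.2.1 with h | h
      · exact hkey a ha b hb h
      · exact (hkey b hb a ha h).symm
    exact Prod.ext h1eq h2eq
  -- the splicing bijection
  set e : {x // x ∈ C} ≃ {x // x ∈ C'} := Finset.equivOfCardEq hCcard with he
  set f : {x // x ∈ C} → V × V := fun c => (c.val.1, (e c).val.2) with hf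
  have hf_inj : Function.Injective f := by
    intro c1 c2 hfc
    have h2a : (f c1).2 = (f c2).2 := congrArg Prod.snd hfc
    have h2b : (e c1).val.2 = (e c2).val.2 := h2a
    have := hextC' (e c1).val (e c1).prop (e c2).val (e c2).prop h2b
    exact e.injective (Subtype.ext this)
  set spl : Finset (V × V) := C.attach.image f with hspl
  have hspl_mem : ∀ p ∈ spl, ∃ c : {x // x ∈ C}, f c = p := by
    intro p hp
    rw [hspl, Finset.mem_image] at hp
    obtain ⟨c, _, hc⟩ := hp
    exact ⟨c, hc⟩
  -- the pieces of the new solution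
  set kept : Finset (V × V) := P.filter (fun p => ¬ T.anc w p.2) with hkept
  set ins : Finset (V × V) := P'.filter (fun p => T.anc w p.1) with hins
  set P'' : Finset (V × V) := kept ∪ (ins ∪ spl) with hP''def
  set D'' : Finset V :=
    (D.filter (fun x => ¬ T.anc w x)) ∪ (D'.filter (fun x => T.anc w x)) with hD''def
  have hD''mem : ∀ v, v ∈ D'' ↔ (v ∈ D ∧ ¬ T.anc w v) ∨ (v ∈ D' ∧ T.anc w v) := by
    intro v
    rw [hD''def, Finset.mem_union, Finset.mem_filter, Finset.mem_filter]
  -- disjointness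
  have hdisj2 : Disjoint ins spl := by
    rw [Finset.disjoint_left]
    intro p hp hp2
    obtain ⟨c, hc⟩ := hspl_mem p hp2
    have hcm := hCfacts c
    have : ¬ T.anc w p.1 := by
      rw [← hc]
      exact hnot_wx _ hcm.2.1 (Ne.symm hcm.2.2.2)
    exact this (Finset.mem_filter.mp hp).2
  have hdisj1 : Disjoint kept (ins ∪ spl) := by
    rw [Finset.disjoint_left]
    intro p hp hp2
    have hk := (Finset.mem_filter.mp hp).2
    rcases Finset.mem_union.mp hp2 with h | h
    · have hm := Finset.mem_filter.mp h
      exact hk (T.anc_trans hm.2 (h1' p hm.1))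
    · obtain ⟨c, hc⟩ := hspl_mem p h
      apply hk
      rw [← hc]
      exact (hC'facts (e c)).2.2.1
  -- generic count decompositions
  have hsplcount : ∀ (π : (V × V) → Prop) (inst : DecidablePred π),
      (@Finset.filter _ _ inst spl).card
        = (@Finset.filter _ _ (fun c => inst (f c)) C.attach).card := by
    intro π inst
    letI := inst
    rw [hspl, Finset.filter_image, Finset.card_image_of_injective _ hf_inj]
  have hPP : ∀ (π : (V × V) → Prop) (inst : DecidablePred π),
      (@Finset.filter _ _ inst P'').card = (@Finset.filter _ _ inst kept).card
        + ((@Finset.filter _ _ inst ins).card + (@Finset.filter _ _ inst spl).card) := by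
    intro π inst
    letI := inst
    have d2 := Finset.disjoint_filter_filter (p := π) (q := π) hdisj2
    have d1 : Disjoint (Finset.filter π kept) (Finset.filter π ins ∪ Finset.filter π spl) := by
      rw [← Finset.filter_union]
      exact Finset.disjoint_filter_filter hdisj1
    rw [hP''def, Finset.filter_union, Finset.filter_union,
      Finset.card_union_of_disjoint d1, Finset.card_union_of_disjoint d2]
  have hPsplit : ∀ (S : Finset (V × V)) (π : (V × V) → Prop) (inst : DecidablePred π),
      (@Finset.filter _ _ inst (S.filter (fun p => T.anc w p.2))).card
        + (@Finset.filter _ _ inst (S.filter (fun p => ¬ T.anc w p.2))).card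
        = (@Finset.filter _ _ inst S).card := by
    intro S π inst
    letI := inst
    rw [Finset.filter_comm, show (S.filter (fun p => ¬ T.anc w p.2)).filter π
        = (S.filter π).filter (fun p => ¬ T.anc w p.2) from Finset.filter_comm _ _ _]
    exact Finset.card_filter_add_card_filter_not _
  -- P' inside decomposition
  have hrem' : P'.filter (fun p => T.anc w p.2) = ins ∪ C' := by
    ext p
    rw [Finset.mem_union, hins, hC', Finset.mem_filter, Finset.mem_filter, Finset.mem_filter]
    constructor
    · rintro ⟨hp, hp2⟩
      by_cases hc : T.anc w p.1
      · exact Or.inl ⟨hp, hc⟩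
      · refine Or.inr ⟨hp, ?_, hp2, ?_⟩
        · rcases T.anc_total (h1' p hp) hp2 with h | h
          · exact h
          · exact absurd h hc
        · intro hep
          apply hc; rw [← hep]; exact T.anc_refl w
    · rintro (⟨hp, hc⟩ | ⟨hp, _, hy, _⟩)
      · exact ⟨hp, T.anc_trans hc (h1' p hp)⟩
      · exact ⟨hp, hy⟩
  have hinsC'disj : Disjoint ins C' := by
    rw [Finset.disjoint_left]
    intro p hp hp2
    have h1m := (Finset.mem_filter.mp hp).2
    have h2m := (Finset.mem_filter.mp hp2).2
    exact hnot_wx _ h2m.1 (Ne.symm h2m.2.2) h1m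
  -- the rem = C equation for paths counted at v outside A^w
  have hremPC : ∀ (S : Finset (V × V)) (v : V), ¬ T.anc w v →
      (S.filter (fun p => T.anc w p.2)).filter
          (fun p => T.anc p.1 v ∧ T.anc v p.2 ∧ v ≠ p.1)
        = (S.filter (fun p => T.anc p.1 w ∧ T.anc w p.2 ∧ w ≠ p.1)).filter
          (fun p => T.anc p.1 v ∧ T.anc v p.2 ∧ v ≠ p.1) := by
    intro S v hv
    ext p
    rw [Finset.mem_filter, Finset.mem_filter, Finset.mem_filter, Finset.mem_filter]
    constructor
    · rintro ⟨⟨hp, hp2⟩, hq⟩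
      have hvw : T.anc v w := by
        rcases T.anc_total hq.2.1 hp2 with h | h
        · exact h
        · exact absurd h hv
      refine ⟨⟨hp, T.anc_trans hq.1 hvw, hp2, ?_⟩, hq⟩
      intro hew
      apply hv; rw [hew]; exact hq.1
    · rintro ⟨⟨hp, _, hy, _⟩, hq⟩
      exact ⟨⟨hp, hy⟩, hq⟩
  -- pn of P'' outside A^w
  have hpn_out : ∀ v, ¬ T.anc w v → T.pn P'' v = T.pn P v := by
    intro v hv
    show (P''.filter (fun p => T.anc p.1 v ∧ T.anc v p.2 ∧ v ≠ p.1)).card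
      = (P.filter (fun p => T.anc p.1 v ∧ T.anc v p.2 ∧ v ≠ p.1)).card
    rw [hPP]
    have hins0 : (ins.filter (fun p => T.anc p.1 v ∧ T.anc v p.2 ∧ v ≠ p.1)).card = 0 := by
      rw [Finset.card_eq_zero, Finset.filter_eq_empty_iff]
      intro p hp hq
      exact hv (T.anc_trans (Finset.mem_filter.mp hp).2 hq.1)
    have hspl_eq : (spl.filter (fun p => T.anc p.1 v ∧ T.anc v p.2 ∧ v ≠ p.1)).card
        = (C.filter (fun p => T.anc p.1 v ∧ T.anc v p.2 ∧ v ≠ p.1)).card := by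
      rw [hsplcount]
      rw [Finset.filter_congr (q := fun c : {x // x ∈ C} =>
        T.anc c.val.1 v ∧ T.anc v c.val.2 ∧ v ≠ c.val.1) ?_]
      · exact card_filter_attach' C (fun p => T.anc p.1 v ∧ T.anc v p.2 ∧ v ≠ p.1) _ _
      · intro c _
        have hcm := hCfacts c
        have hey := (hC'facts (e c)).2.2.1
        constructor
        · rintro ⟨ha, hb, hc2⟩
          have hvw : T.anc v w := by
            rcases T.anc_total hb hey with h | h
            · exact h
            · exact absurd h hv
          exact ⟨ha, T.anc_trans hvw hcm.2.2.1, hc2⟩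
        · rintro ⟨ha, hb, hc2⟩
          have hvw : T.anc v w := by
            rcases T.anc_total hb hcm.2.2.1 with h | h
            · exact h
            · exact absurd h hv
          exact ⟨ha, T.anc_trans hvw hey, hc2⟩
    have hPs := hPsplit P (fun p => T.anc p.1 v ∧ T.anc v p.2 ∧ v ≠ p.1) inferInstance
    rw [hremPC P v hv, ← hC, ← hkept] at hPs
    omega
  -- pn of P'' inside A^w
  have hpn_in : ∀ v, T.anc w v → T.pn P'' v = T.pn P' v := by
    intro v hv
    show (P''.filter (fun p => T.anc p.1 v ∧ T.anc v p.2 ∧ v ≠ p.1)).card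
      = (P'.filter (fun p => T.anc p.1 v ∧ T.anc v p.2 ∧ v ≠ p.1)).card
    rw [hPP]
    have hkept0 : (kept.filter (fun p => T.anc p.1 v ∧ T.anc v p.2 ∧ v ≠ p.1)).card = 0 := by
      rw [Finset.card_eq_zero, Finset.filter_eq_empty_iff]
      intro p hp hq
      exact (Finset.mem_filter.mp hp).2 (T.anc_trans hv hq.2.1)
    have hspl_eq : (spl.filter (fun p => T.anc p.1 v ∧ T.anc v p.2 ∧ v ≠ p.1)).card
        = (C'.filter (fun p => T.anc p.1 v ∧ T.anc v p.2 ∧ v ≠ p.1)).card := by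
      rw [hsplcount]
      rw [Finset.filter_congr (q := fun c : {x // x ∈ C} => T.anc v (e c).val.2) ?_]
      · rw [card_filter_equivImage' e (fun p => T.anc v p.2) _ _]
        refine congrArg Finset.card (Finset.filter_congr ?_)
        intro p hp
        have hm := (Finset.mem_filter.mp hp).2
        constructor
        · intro hb
          refine ⟨T.anc_trans hm.1 hv, hb, ?_⟩
          intro hvp
          apply hm.2.2
          apply T.anc_antisymm
          · rw [← hvp]; exact hv
          · exact hm.1
        · exact fun hq => hq.2.1
      · intro c _
        have hcm := hCfacts c
        constructor
        · exact fun hq => hq.2.1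
        · intro hb
          refine ⟨T.anc_trans hcm.2.1 hv, hb, ?_⟩
          intro hvc
          apply hcm.2.2.2
          apply T.anc_antisymm
          · rw [hvc] at hv; exact hv
          · exact hcm.2.1
    have hPs := hPsplit P' (fun p => T.anc p.1 v ∧ T.anc v p.2 ∧ v ≠ p.1) inferInstance
    rw [hrem', Finset.filter_union,
      Finset.card_union_of_disjoint (Finset.disjoint_filter_filter hinsC'disj)] at hPs
    have hout0 : ((P'.filter (fun p => ¬ T.anc w p.2)).filter
        (fun p => T.anc p.1 v ∧ T.anc v p.2 ∧ v ≠ p.1)).card = 0 := by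
      rw [Finset.card_eq_zero, Finset.filter_eq_empty_iff]
      intro p hp hq
      exact (Finset.mem_filter.mp hp).2 (T.anc_trans hv hq.2.1)
    omega
  -- counting paths ending at a given vertex
  have hend_in : ∀ r, T.anc w r →
      (P''.filter (fun p => p.2 = r)).card = (P'.filter (fun p => p.2 = r)).card := by
    intro r hr
    rw [hPP]
    have hkept0 : (kept.filter (fun p => p.2 = r)).card = 0 := by
      rw [Finset.card_eq_zero, Finset.filter_eq_empty_iff]
      intro p hp hq
      apply (Finset.mem_filter.mp hp).2
      rw [hq]; exact hr
    have hspl_eq : (spl.filter (fun p => p.2 = r)).card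
        = (C'.filter (fun p => p.2 = r)).card := by
      rw [hsplcount]
      exact card_filter_equivImage' e (fun p => p.2 = r) _ _
    have hPs := hPsplit P' (fun p => p.2 = r) inferInstance
    rw [hrem', Finset.filter_union,
      Finset.card_union_of_disjoint (Finset.disjoint_filter_filter hinsC'disj)] at hPs
    have hout0 : ((P'.filter (fun p => ¬ T.anc w p.2)).filter
        (fun p => p.2 = r)).card = 0 := by
      rw [Finset.card_eq_zero, Finset.filter_eq_empty_iff]
      intro p hp hq
      apply (Finset.mem_filter.mp hp).2
      rw [hq]; exact hr
    omega
  have hend_out : ∀ r, ¬ T.anc w r →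
      (P''.filter (fun p => p.2 = r)).card = (P.filter (fun p => p.2 = r)).card := by
    intro r hr
    rw [hPP]
    have hins0 : (ins.filter (fun p => p.2 = r)).card = 0 := by
      rw [Finset.card_eq_zero, Finset.filter_eq_empty_iff]
      intro p hp hq
      apply hr
      rw [← hq]
      exact T.anc_trans (Finset.mem_filter.mp hp).2 (h1' p (Finset.mem_filter.mp hp).1)
    have hspl0 : (spl.filter (fun p => p.2 = r)).card = 0 := by
      rw [hsplcount]
      rw [Finset.card_eq_zero, Finset.filter_eq_empty_iff]
      intro c _ hq
      apply hr
      rw [← hq]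
      exact (hC'facts (e c)).2.2.1
    have hPs := hPsplit P (fun p => p.2 = r) inferInstance
    have hrem0 : ((P.filter (fun p => T.anc w p.2)).filter
        (fun p => p.2 = r)).card = 0 := by
      rw [Finset.card_eq_zero, Finset.filter_eq_empty_iff]
      intro p hp hq
      apply hr
      rw [← hq]
      exact (Finset.mem_filter.mp hp).2
    rw [← hkept] at hPs
    omega
  -- the hybrid is a solution
  have hsol'' : T.isSolution R D'' P'' := by
    refine ⟨?_, ?_, ?_, ?_, ?_⟩
    · -- condition 1
      intro p hp
      rcases Finset.mem_union.mp hp with hk | hrest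
      · exact h1 p (Finset.mem_filter.mp hk).1
      rcases Finset.mem_union.mp hrest with hi | hs
      · exact h1' p (Finset.mem_filter.mp hi).1
      · obtain ⟨c, hc⟩ := hspl_mem p hs
        rw [← hc]
        exact T.anc_trans (hCfacts c).2.1 (hC'facts (e c)).2.2.1
    · -- condition 2
      intro r hr
      by_cases hcase : T.anc w r
      · rw [hend_in r hcase]; exact h2' r hr
      · rw [hend_out r hcase]; exact h2 r hr
    · -- condition 3
      intro v hv
      rcases (hD''mem v).mp hv with ⟨hvD, hnv⟩ | ⟨hvD', hav⟩
      · rw [hend_out v hnv]; exact h3 v hvD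
      · rw [hend_in v hav]; exact h3' v hvD'
    · -- condition 4
      intro p hp
      rcases Finset.mem_union.mp hp with hk | hrest
      · obtain ⟨hpP, hp2⟩ := Finset.mem_filter.mp hk
        rcases h4 p hpP with hroot | ⟨hpD, q, hq, hq2⟩
        · exact Or.inl hroot
        · have hnp1 : ¬ T.anc w p.1 := fun hc => hp2 (T.anc_trans hc (h1 p hpP))
          refine Or.inr ⟨(hD''mem p.1).mpr (Or.inl ⟨hpD, hnp1⟩),
            q, Finset.mem_union_left _ (Finset.mem_filter.mpr ⟨hq, ?_⟩), hq2⟩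
          rw [hq2]; exact hnp1
      rcases Finset.mem_union.mp hrest with hi | hs
      · obtain ⟨hpP', hp1⟩ := Finset.mem_filter.mp hi
        rcases h4' p hpP' with hroot | ⟨hpD', q, hq, hq2⟩
        · exact Or.inl hroot
        · refine Or.inr ⟨(hD''mem p.1).mpr (Or.inr ⟨hpD', hp1⟩), ?_⟩
          have hq2w : q ∈ P'.filter (fun p => T.anc w p.2) := by
            refine Finset.mem_filter.mpr ⟨hq, ?_⟩
            rw [hq2]; exact hp1
          rw [hrem'] at hq2w
          rcases Finset.mem_union.mp hq2w with hqi | hqc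
          · exact ⟨q, Finset.mem_union_right _ (Finset.mem_union_left _ hqi), hq2⟩
          · refine ⟨f (e.symm ⟨q, hqc⟩),
              Finset.mem_union_right _ (Finset.mem_union_right _
                (Finset.mem_image_of_mem f (Finset.mem_attach _ _))), ?_⟩
            show (e (e.symm ⟨q, hqc⟩)).val.2 = p.1
            rw [Equiv.apply_symm_apply]
            exact hq2
      · obtain ⟨c, hc⟩ := hspl_mem p hs
        have hcm := hCfacts c
        rcases h4 c.val hcm.1 with hroot | ⟨hcD, q, hq, hq2⟩
        · left; rw [← hc]; exact hroot
        · right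
          have hnwc1 : ¬ T.anc w c.val.1 := hnot_wx _ hcm.2.1 (Ne.symm hcm.2.2.2)
          refine ⟨?_, q, Finset.mem_union_left _ (Finset.mem_filter.mpr ⟨hq, ?_⟩), ?_⟩
          · rw [← hc]; exact (hD''mem _).mpr (Or.inl ⟨hcD, hnwc1⟩)
          · rw [hq2]; exact hnwc1
          · rw [hq2, ← hc]
    · -- condition 5
      intro v hv p hp hvp
      rcases (hD''mem v).mp hv with ⟨hvD, hnv⟩ | ⟨hvD', hav⟩
      · rcases Finset.mem_union.mp hp with hk | hrest
        · exact h5 v hvD p (Finset.mem_filter.mp hk).1 hvp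
        rcases Finset.mem_union.mp hrest with hi | hs
        · exact absurd (T.anc_trans (Finset.mem_filter.mp hi).2 hvp.1) hnv
        · obtain ⟨c, hc⟩ := hspl_mem p hs
          have hcm := hCfacts c
          have hey := (hC'facts (e c)).2.2.1
          have hvw : T.anc v w := by
            rcases T.anc_total (hc ▸ hvp.2 : T.anc v (f c).2) hey with h | h
            · exact h
            · exact absurd h hnv
          have h5a := h5 v hvD c.val hcm.1
            ⟨by rw [← hc] at hvp; exact hvp.1, T.anc_trans hvw hcm.2.2.1⟩
          rcases h5a with h | h
          · left; rw [← hc]; exact h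
          · exfalso; apply hnv; rw [h]; exact hcm.2.2.1
      · rcases Finset.mem_union.mp hp with hk | hrest
        · exact absurd (T.anc_trans hav hvp.2) (Finset.mem_filter.mp hk).2
        rcases Finset.mem_union.mp hrest with hi | hs
        · exact h5' v hvD' p (Finset.mem_filter.mp hi).1 hvp
        · obtain ⟨c, hc⟩ := hspl_mem p hs
          have hc' := hC'facts (e c)
          have h5a := h5' v hvD' (e c).val hc'.1
            ⟨T.anc_trans hc'.2.1 hav, by rw [← hc] at hvp; exact hvp.2⟩
          rcases h5a with h | h
          · exfalso
            apply hc'.2.2.2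
            apply T.anc_antisymm
            · rw [h] at hav; exact hav
            · exact hc'.2.1
          · right; rw [← hc]; exact h
  -- window equalities
  have hpnu : T.pn P'' u = T.pn P u := hpn_out u hnwu
  have hdcu : T.dCount D'' u = T.dCount D u := by
    show (D''.filter (fun x => T.anc u x)).card = (D.filter (fun x => T.anc u x)).card
    have hD1 : (D''.filter (fun x => T.anc u x)).card
        = ((D.filter (fun x => ¬ T.anc w x)).filter (fun x => T.anc u x)).card
          + ((D'.filter (fun x => T.anc w x)).filter (fun x => T.anc u x)).card := by
      rw [hD''def, Finset.filter_union]
      apply Finset.card_union_of_disjoint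
      apply Finset.disjoint_filter_filter
      rw [Finset.disjoint_left]
      intro x hx hx2
      exact (Finset.mem_filter.mp hx).2 (Finset.mem_filter.mp hx2).2
    have hD2 : ∀ (S : Finset V),
        (S.filter (fun x => T.anc w x)).filter (fun x => T.anc u x)
          = S.filter (fun x => T.anc w x) := by
      intro S
      rw [Finset.filter_filter]
      apply Finset.filter_congr
      intro x _
      constructor
      · exact fun h => h.1
      · exact fun h => ⟨h, hsubwu x h⟩
    have hD3 : ((D.filter (fun x => T.anc w x)).filter (fun x => T.anc u x)).card
        + ((D.filter (fun x => ¬ T.anc w x)).filter (fun x => T.anc u x)).card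
        = (D.filter (fun x => T.anc u x)).card := by
      rw [Finset.filter_comm, show (D.filter (fun x => ¬ T.anc w x)).filter (fun x => T.anc u x)
          = (D.filter (fun x => T.anc u x)).filter (fun x => ¬ T.anc w x) from
          Finset.filter_comm _ _ _]
      exact Finset.card_filter_add_card_filter_not _
    have hdw : ((D'.filter (fun x => T.anc w x)).filter (fun x => T.anc u x)).card
        = ((D.filter (fun x => T.anc w x)).filter (fun x => T.anc u x)).card := by
      rw [hD2, hD2]
      exact hd'
    omega
  -- load decomposition
  have hsplitSum : ∀ S : Finset (V × V), T.loadIn S u =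
      (∑ x ∈ Finset.univ.filter (fun x => T.anc u x ∧ ¬ T.anc w x), T.pn S x)
        + T.loadIn S w := by
    intro S
    show (∑ x ∈ Finset.univ.filter (fun x => T.anc u x), T.pn S x) = _
    have hset : Finset.univ.filter (fun x => T.anc u x)
        = Finset.univ.filter (fun x => T.anc u x ∧ ¬ T.anc w x)
          ∪ Finset.univ.filter (fun x => T.anc w x) := by
      ext x
      simp only [Finset.mem_filter, Finset.mem_union, Finset.mem_univ, true_and]
      constructor
      · intro h
        by_cases hw' : T.anc w x
        · exact Or.inr hw'
        · exact Or.inl ⟨h, hw'⟩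
      · rintro (⟨h, _⟩ | h)
        · exact h
        · exact hsubwu x h
    have hdj : Disjoint (Finset.univ.filter (fun x => T.anc u x ∧ ¬ T.anc w x))
        (Finset.univ.filter (fun x => T.anc w x)) := by
      rw [Finset.disjoint_left]
      intro x hx hx2
      exact (Finset.mem_filter.mp hx).2.2 (Finset.mem_filter.mp hx2).2
    rw [hset, Finset.sum_union hdj]
    rfl
  have hload'' : T.loadIn P'' u + T.loadIn P w = T.loadIn P u + T.loadIn P' w := by
    have hsum1 : (∑ x ∈ Finset.univ.filter (fun x => T.anc u x ∧ ¬ T.anc w x), T.pn P'' x)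
        = ∑ x ∈ Finset.univ.filter (fun x => T.anc u x ∧ ¬ T.anc w x), T.pn P x :=
      Finset.sum_congr rfl (fun x hx => hpn_out x (Finset.mem_filter.mp hx).2.2)
    have hlw : T.loadIn P'' w = T.loadIn P' w := by
      show (∑ x ∈ Finset.univ.filter (fun x => T.anc w x), T.pn P'' x)
        = ∑ x ∈ Finset.univ.filter (fun x => T.anc w x), T.pn P' x
      exact Finset.sum_congr rfl (fun x hx => hpn_in x (Finset.mem_filter.mp hx).2)
    rw [hsplitSum P'', hsplitSum P, hsum1, hlw]
    ring
  have hle := hsub D'' P'' hsol'' hpnu hdcu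
  have hwle : T.loadIn P w ≤ T.loadIn P u := by
    rw [hsplitSum P]; omega
  omega
end

section
/- Placing one diffusing node optimally in a multicast tree never increases the minimal load, and strictly decreases it whenever some non-destination node of the tree has at least two paths of the diffusing-free solution passing through it; more precisely, if pn(u) ≥ 2 for some internal node u of A under D = ∅, then the optimal load with k = 1 is at most load(∅) − (pn(u) − 1)·depth(u), where depth(u) is the distance from e to u. -/
attribute [local instance] Classical.propDecidable

/-- Placing one diffusing node optimally never increases the minimal load, and if
some internal node `u` has `pn u ≥ 2` in the diffusing-free solution, the optimum
with `k = 1` is at most `load(∅) − (pn u − 1) · depth u`. -/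
theorem one_diffusing_node_saving {V : Type} [Fintype V] [DecidableEq V]
    (T : MTree V) (R : Finset V) (P : Finset (V × V))
    (hsol : T.isSolution R ∅ P) :
    sInf {l | ∃ D : Finset V, ∃ P' : Finset (V × V),
        T.isSolution R D P' ∧ D.card ≤ 1 ∧ T.load P' = l} ≤ T.load P ∧
    ∀ u : V, (∃ w, T.isChild w u) → 2 ≤ T.pn P u →
      sInf {l | ∃ D : Finset V, ∃ P' : Finset (V × V),
          T.isSolution R D P' ∧ D.card ≤ 1 ∧ T.load P' = l} ≤
        T.load P - (T.pn P u - 1) * T.depth u := by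
  classical
  constructor
  · exact Nat.sInf_le ⟨∅, P, hsol, by simp, rfl⟩
  intro u _ hpn
  obtain ⟨h1, h2, h3, h4, h5⟩ := hsol
  have hp1 : ∀ p ∈ P, p.1 = T.root := by
    intro p hp
    rcases h4 p hp with h | h
    · exact h
    · exact absurd h.1 (Finset.notMem_empty _)
  have hune : u ≠ T.root := by
    have hpos : 0 < T.pn P u := by omega
    rw [MTree.pn, Finset.card_pos] at hpos
    obtain ⟨p, hp⟩ := hpos
    simp only [Finset.mem_filter] at hp
    exact fun h => hp.2.2.2 (h.trans (hp1 p hp.1).symm)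
  set d := T.depth u with hd
  have hancroot : ∀ v, T.anc T.root v := fun v => T.reach v
  have hancself : ∀ v : V, T.anc v v := fun v => ⟨0, rfl⟩
  set f : V × V → V × V := fun p => if T.anc u p.2 ∧ p.2 ≠ u then (u, p.2) else p with hf
  have hf2 : ∀ p, (f p).2 = p.2 := by
    intro p; rw [hf]; dsimp only; split <;> rfl
  have hfinj : Set.InjOn f ↑P := by
    intro p hp q hq hpq
    have h2' : p.2 = q.2 := by rw [← hf2 p, ← hf2 q, hpq]
    exact Prod.ext ((hp1 p hp).trans (hp1 q hq).symm) h2'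
  set P' : Finset (V × V) := insert (T.root, u) (P.image f) with hP'
  -- characterize paths of P' ending at a given vertex
  have hendu : P'.filter (fun p => p.2 = u) = {(T.root, u)} := by
    ext p
    simp only [hP', Finset.mem_filter, Finset.mem_insert, Finset.mem_image,
      Finset.mem_singleton]
    constructor
    · rintro ⟨hp | ⟨q, hq, rfl⟩, h2'⟩
      · exact hp
      · have hq2 : q.2 = u := by rw [← hf2 q]; exact h2'
        have : f q = q := by rw [hf]; dsimp only; rw [if_neg (by simp [hq2])]
        rw [this]
        exact Prod.ext (hp1 q hq) hq2
    · rintro rfl; exact ⟨Or.inl rfl, rfl⟩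
  have hendr : ∀ r : V, r ≠ u →
      P'.filter (fun p => p.2 = r) = (P.filter (fun p => p.2 = r)).image f := by
    intro r hr
    rw [hP', Finset.filter_insert, if_neg (by simpa using fun h => hr h.symm),
      Finset.filter_image]
    congr 1
    exact Finset.filter_congr (fun p _ => by rw [hf2])
  have hcard_end : ∀ r : V, r ≠ u →
      (P'.filter (fun p => p.2 = r)).card = (P.filter (fun p => p.2 = r)).card := by
    intro r hr
    rw [hendr r hr]
    exact Finset.card_image_of_injOn (hfinj.mono (by
      intro x hx; exact Finset.mem_coe.mpr (Finset.filter_subset _ _ (Finset.mem_coe.mp hx))))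
  -- P' is a solution for D = {u}
  have hsol' : T.isSolution R {u} P' := by
    refine ⟨?_, ?_, ?_, ?_, ?_⟩
    · intro p hp
      rw [hP'] at hp
      rcases Finset.mem_insert.mp hp with rfl | hp
      · exact hancroot u
      · obtain ⟨q, hq, rfl⟩ := Finset.mem_image.mp hp
        rw [hf]; dsimp only; split
        · next h => exact h.1
        · next h => rw [hp1 q hq]; exact hancroot q.2
    · intro r hr
      by_cases hru : r = u
      · subst hru; rw [hendu]; simp
      · rw [hcard_end r hru]; exact h2 r hr
    · intro v hv
      rw [Finset.mem_singleton] at hv; subst v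
      rw [hendu]; simp
    · intro p hp
      rw [hP'] at hp
      rcases Finset.mem_insert.mp hp with rfl | hp
      · exact Or.inl rfl
      · obtain ⟨q, hq, rfl⟩ := Finset.mem_image.mp hp
        rw [hf]; dsimp only; split
        · exact Or.inr ⟨Finset.mem_singleton_self u,
            ⟨(T.root, u), by rw [hP']; exact Finset.mem_insert_self _ _, rfl⟩⟩
        · exact Or.inl (hp1 q hq)
    · intro v hv p hp hanc
      rw [Finset.mem_singleton] at hv; subst v
      rw [hP'] at hp
      rcases Finset.mem_insert.mp hp with rfl | hp
      · exact Or.inr rfl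
      · obtain ⟨q, hq, rfl⟩ := Finset.mem_image.mp hp
        rw [hf] at hanc ⊢; dsimp only at hanc ⊢
        split at hanc <;> split
        · exact Or.inl rfl
        · next h h' => exact absurd ‹_› h'
        · next h' h => exact absurd ‹_› h'
        · next h _ =>
          by_cases hq2 : q.2 = u
          · exact Or.inr hq2.symm
          · exact absurd ⟨hanc.2, hq2⟩ h
  -- load computations
  set M : Finset (V × V) := P.filter (fun p => T.anc u p.2 ∧ p.2 ≠ u) with hM
  set SM := ∑ p ∈ M, T.depth p.2 with hSM
  set SK := ∑ p ∈ P.filter (fun p => ¬(T.anc u p.2 ∧ p.2 ≠ u)), T.depth p.2 with hSK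
  set X := ∑ p ∈ M, (T.depth p.2 - d) with hX
  have hdroot : T.depth T.root = 0 :=
    Nat.eq_zero_of_le_zero (Nat.find_le (show T.parent^[0] T.root = T.root from rfl))
  have hdepth2 : ∀ p ∈ P, T.depth p.2 - T.depth p.1 = T.depth p.2 := by
    intro p hp; rw [hp1 p hp, hdroot, Nat.sub_zero]
  have hdle : ∀ p ∈ M, d ≤ T.depth p.2 := by
    intro p hp
    rw [hM, Finset.mem_filter] at hp
    obtain ⟨n, hn⟩ := hp.2.1
    by_cases hu0 : (u : V) = T.root
    · exact absurd hu0 hune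
    have hv : T.parent^[T.depth p.2] p.2 = T.root := Nat.find_spec (T.reach p.2)
    have hnle : n ≤ T.depth p.2 := by
      by_contra hle
      push_neg at hle
      apply hune
      calc u = T.parent^[n] p.2 := hn.symm
        _ = T.parent^[n - T.depth p.2] (T.parent^[T.depth p.2] p.2) := by
            rw [← Function.iterate_add_apply, Nat.sub_add_cancel (le_of_lt hle)]
        _ = T.root := by rw [hv]; exact Function.iterate_fixed T.parent_root _
    have : T.parent^[T.depth p.2 - n] u = T.root := by
      calc T.parent^[T.depth p.2 - n] u
          = T.parent^[T.depth p.2 - n] (T.parent^[n] p.2) := by rw [hn]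
        _ = T.parent^[T.depth p.2] p.2 := by
            rw [← Function.iterate_add_apply, Nat.sub_add_cancel hnle]
        _ = T.root := hv
    exact le_trans (Nat.find_le this) (Nat.sub_le _ _)
  have hE : X + M.card * d = SM := by
    calc X + M.card * d
        = ∑ p ∈ M, (T.depth p.2 - d) + ∑ _p ∈ M, d := by
          rw [Finset.sum_const, smul_eq_mul, hX]
      _ = ∑ p ∈ M, (T.depth p.2 - d + d) := Finset.sum_add_distrib.symm
      _ = SM := Finset.sum_congr rfl fun p hp => Nat.sub_add_cancel (hdle p hp)
  -- pn computation
  have hA : P.filter (fun p => T.anc p.1 u ∧ T.anc u p.2 ∧ u ≠ p.1)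
      = P.filter (fun p => T.anc u p.2) := by
    refine Finset.filter_congr fun p hp => ?_
    rw [hp1 p hp]
    exact ⟨fun h => h.2.1, fun h => ⟨hancroot u, h, hune⟩⟩
  have hAfu : (P.filter (fun p => T.anc u p.2)).filter (fun p => p.2 = u)
      = P.filter (fun p => p.2 = u) := by
    rw [Finset.filter_filter]
    exact Finset.filter_congr fun p hp =>
      ⟨fun h => h.2, fun h => ⟨h ▸ hancself u, h⟩⟩
  have hAfM : (P.filter (fun p => T.anc u p.2)).filter (fun p => ¬p.2 = u) = M := by
    rw [Finset.filter_filter, hM]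
  have hpncalc : T.pn P u = (P.filter (fun p => p.2 = u)).card + M.card := by
    rw [MTree.pn, hA, ← Finset.card_filter_add_card_filter_not
      (s := P.filter (fun p => T.anc u p.2)) (fun p => p.2 = u), hAfu, hAfM]
  -- (root, u) ∈ image f ↔ (root, u) ∈ P
  have himg : (T.root, u) ∈ P.image f ↔ (T.root, u) ∈ P := by
    constructor
    · rintro h
      obtain ⟨q, hq, hfq⟩ := Finset.mem_image.mp h
      have hq2 : q.2 = u := by rw [← hf2 q, hfq]
      have : f q = q := by rw [hf]; dsimp only; rw [if_neg (by simp [hq2])]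
      rw [this] at hfq
      rwa [← hfq]
    · intro h
      refine Finset.mem_image.mpr ⟨(T.root, u), h, ?_⟩
      rw [hf]; dsimp only; rw [if_neg (by simp)]
  -- load of the image
  have hloadimg : T.load (P.image f) = X + SK := by
    rw [MTree.load, Finset.sum_image (fun x hx y hy => hfinj hx hy),
      ← Finset.sum_filter_add_sum_filter_not P (fun p => T.anc u p.2 ∧ p.2 ≠ u)
      (fun p => T.depth (f p).2 - T.depth (f p).1)]
    congr 1
    · rw [hX]
      refine Finset.sum_congr rfl fun p hp => ?_
      rw [Finset.mem_filter] at hp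
      have : f p = (u, p.2) := by rw [hf]; dsimp only; rw [if_pos hp.2]
      rw [this]
    · rw [hSK]
      refine Finset.sum_congr rfl fun p hp => ?_
      rw [Finset.mem_filter] at hp
      have : f p = p := by rw [hf]; dsimp only; rw [if_neg hp.2]
      rw [this]
      exact hdepth2 p hp.1
  have hloadP : T.load P = SM + SK := by
    rw [MTree.load,
      ← Finset.sum_filter_add_sum_filter_not P (fun p => T.anc u p.2 ∧ p.2 ≠ u)
      (fun p => T.depth p.2 - T.depth p.1), hSM, hSK, hM]
    congr 1
    · exact Finset.sum_congr rfl fun p hp =>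
        hdepth2 p (Finset.mem_filter.mp hp).1
    · exact Finset.sum_congr rfl fun p hp =>
        hdepth2 p (Finset.mem_filter.mp hp).1
  have hfinal : T.load P' ≤ T.load P - (T.pn P u - 1) * d := by
    by_cases hmem : (T.root, u) ∈ P
    · have htc : P.filter (fun p => p.2 = u) = {(T.root, u)} := by
        ext p
        simp only [Finset.mem_filter, Finset.mem_singleton]
        constructor
        · rintro ⟨hp, h2'⟩; exact Prod.ext (hp1 p hp) h2'
        · rintro rfl; exact ⟨hmem, rfl⟩
      have hpnv : T.pn P u = M.card + 1 := by rw [hpncalc, htc]; simp [Nat.add_comm]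
      have hload' : T.load P' = X + SK := by
        rw [hP', Finset.insert_eq_self.mpr (himg.mpr hmem), hloadimg]
      rw [hload', hloadP, hpnv]
      have h1d : (M.card + 1 - 1) * d = M.card * d := by simp
      rw [h1d]
      omega
    · have htc : P.filter (fun p => p.2 = u) = ∅ := by
        refine Finset.filter_eq_empty_iff.mpr fun p hp h2' => ?_
        have hpe : p = (T.root, u) := Prod.ext (hp1 p hp) h2'
        exact hmem (hpe ▸ hp)
      have hpnv : T.pn P u = M.card := by rw [hpncalc, htc]; simp
      have hmge : 2 ≤ M.card := by omega
      have hload' : T.load P' = d + (X + SK) := by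
        rw [hP', MTree.load, Finset.sum_insert (fun h => hmem (himg.mp h)),
          ← MTree.load, hloadimg]
        dsimp only
        rw [hdroot, Nat.sub_zero]
      have hdd : d ≤ M.card * d := Nat.le_mul_of_pos_left d (by omega)
      rw [hload', hloadP, hpnv, Nat.sub_one_mul]
      omega
  exact le_trans (Nat.sInf_le ⟨{u}, P', hsol', by simp, rfl⟩) hfinal
end
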